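/- Let δ = ±1, a ∈ ℝ, τ > 0, h⁺, h⁻ > 0, t, x, x̂ ∈ ℝ, Δx = x̂ − x, and let u, u₊, u₋, û > 0 satisfy both equations of the invariant difference model for u_t = u_xx + δu ln u. Then the transformed values u* = u·exp(a·e^{δt}), u₊* = u₊·exp(a·e^{δt}), u₋* = u₋·exp(a·e^{δt}), û* = û·exp(a·e^{δ(t+τ)}), with the mesh data (t, τ, x, x̂, h⁺, h⁻) unchanged, again satisfy both equations of the model. That is, the scheme is invariant under the one-parameter group generated by X₄ = e^{δt}u∂/∂u. -/
import Mathlib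


open Real

/-- The invariant difference model for the semilinear heat equation
`u_t = u_xx + δu ln u` on a moving mesh with flat time layers:
equation (i) `δΔx + 2(e^{δτ}−1)[(h⁻/(h⁺+h⁻))(ln u)_x + (h⁺/(h⁺+h⁻))(ln u)_x̄] = 0`
and equation (ii)
`δ(Δx)² + 4(1−e^{−δτ})(ln û − e^{δτ}ln u) = (8/δ)(e^{δτ}−1)²/(h⁺+h⁻)·[(ln u)_x − (ln u)_x̄]`,
where `(ln u)_x = (ln u₊ − ln u)/h⁺` and `(ln u)_x̄ = (ln u − ln u₋)/h⁻`. -/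
def SemilinearHeatModel (del τ hp hm Δx u up um uh : ℝ) : Prop :=
  (del * Δx + 2 * (Real.exp (del * τ) - 1)
      * ((hm / (hp + hm)) * ((Real.log up - Real.log u) / hp)
        + (hp / (hp + hm)) * ((Real.log u - Real.log um) / hm)) = 0) ∧
  (del * Δx ^ 2 + 4 * (1 - Real.exp (-(del * τ)))
      * (Real.log uh - Real.exp (del * τ) * Real.log u)
    = (8 / del) * (Real.exp (del * τ) - 1) ^ 2 / (hp + hm)
        * ((Real.log up - Real.log u) / hp - (Real.log u - Real.log um) / hm))

/-- The invariant difference model for `u_t = u_xx + δu ln u` admits the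
one-parameter group generated by `X₄ = e^{δt}u∂/∂u`: multiplying the lower-layer
values by `exp(a e^{δt})` and the upper-layer value by `exp(a e^{δ(t+τ)})`,
with the mesh unchanged, maps solutions to solutions. -/
theorem semilinear_heat_model_X4_invariant
    (del : ℝ) (hdel : del = 1 ∨ del = -1) (a : ℝ)
    (τ hp hm t x xh Δx : ℝ) (hτ : 0 < τ) (hhp : 0 < hp) (hhm : 0 < hm)
    (hΔx : Δx = xh - x)
    (u up um uh : ℝ) (hu : 0 < u) (hup : 0 < up) (hum : 0 < um) (huh : 0 < uh)
    (hmodel : SemilinearHeatModel del τ hp hm Δx u up um uh) :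
    SemilinearHeatModel del τ hp hm Δx
      (u * Real.exp (a * Real.exp (del * t)))
      (up * Real.exp (a * Real.exp (del * t)))
      (um * Real.exp (a * Real.exp (del * t)))
      (uh * Real.exp (a * Real.exp (del * (t + τ)))) := by
  obtain ⟨h1, h2⟩ := hmodel
  have L : ∀ v : ℝ, 0 < v → ∀ c : ℝ,
      Real.log (v * Real.exp c) = Real.log v + c := fun v hv c => by
    rw [Real.log_mul (ne_of_gt hv) (Real.exp_ne_zero c), Real.log_exp]
  have he : Real.exp (del * (t + τ)) = Real.exp (del * t) * Real.exp (del * τ) := by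
    rw [← Real.exp_add]; ring_nf
  constructor
  · rw [L u hu, L up hup, L um hum]
    convert h1 using 3 <;> ring
  · rw [L u hu, L up hup, L um hum, L uh huh, he]
    convert h2 using 2 <;> ring
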